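/- The sequence (Σ_{λ ⊢ n} z_λ)/n! tends to 1 as n → ∞, where z_λ = Π_i i^{m_i} m_i! with m_i the number of parts of λ equal to i. In particular, the sum Σ_{λ ⊢ n} z_λ is asymptotic to n!, being dominated by the single term z_{(1^n)} = n!. -/

import Mathlib

open MvPolynomial

namespace TensorMatrix

/-- The `j`-th part (0-indexed, in weakly decreasing order) of a partition of `n`;
defined to be `0` beyond the number of parts. -/
def part {n : ℕ} (μ : n.Partition) (j : ℕ) : ℕ :=
  ((μ.parts.sort (· ≤ ·)).reverse).getD j 0

/-- The number of parts (rows) of a partition. -/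
def numRows {n : ℕ} (μ : n.Partition) : ℕ := Multiset.card μ.parts

/-- Auxiliary counting lemma: summing, over `j < n`, the number of parts exceeding `j`
recovers the total number of boxes. -/
theorem sum_card_filter_lt (n : ℕ) (s : Multiset ℕ) (hs : ∀ p ∈ s, p ≤ n) :
    (∑ j ∈ Finset.range n, Multiset.card (s.filter (fun p => j < p))) = s.sum := by
  induction s using Multiset.induction with
  | empty => simp
  | cons a s ih =>
    have ha : a ≤ n := hs a (Multiset.mem_cons_self a s)
    have ih' := ih (fun p hp => hs p (Multiset.mem_cons_of_mem hp))
    have hstep : ∀ j : ℕ, Multiset.card ((a ::ₘ s).filter (fun p => j < p))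
        = Multiset.card (s.filter (fun p => j < p)) + (if j < a then 1 else 0) := by
      intro j
      by_cases h : j < a <;> simp [Multiset.filter_cons, h, add_comm]
    rw [Finset.sum_congr rfl (fun j _ => hstep j), Finset.sum_add_distrib, ih']
    have : (∑ j ∈ Finset.range n, if j < a then 1 else 0) = a := by
      have h1 : (Finset.range n).filter (fun j => j < a) = Finset.range a := by
        ext j
        simp only [Finset.mem_filter, Finset.mem_range]
        omega
      rw [Finset.sum_boole, h1]
      simp
    rw [this, Multiset.sum_cons]
    omega

/-- The conjugate (transposed) partition. -/
def conj {n : ℕ} (μ : n.Partition) : n.Partition :=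
  Nat.Partition.ofSums n
    ((Multiset.range n).map fun j => Multiset.card (μ.parts.filter (fun p => j < p)))
    (by
      have hle : ∀ p ∈ μ.parts, p ≤ n := by
        intro p hp
        have := μ.parts_sum
        calc p ≤ μ.parts.sum := Multiset.single_le_sum (fun x _ => Nat.zero_le x) p hp
        _ = n := μ.parts_sum
      calc ((Multiset.range n).map fun j =>
              Multiset.card (μ.parts.filter (fun p => j < p))).sum
          = ∑ j ∈ Finset.range n, Multiset.card (μ.parts.filter (fun p => j < p)) := by
            rw [Finset.sum_eq_multiset_sum]; rfl
        _ = μ.parts.sum := sum_card_filter_lt n μ.parts hle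
        _ = n := μ.parts_sum)

/-- Power sum polynomial `p_m = ∑ᵢ xᵢ^m` in `N` variables. -/
noncomputable def pSum (N m : ℕ) : MvPolynomial (Fin N) ℤ :=
  ∑ i : Fin N, X i ^ m

/-- The Vandermonde product `∏_{i<j} (xᵢ - xⱼ)` in `N` variables. -/
noncomputable def vander (N : ℕ) : MvPolynomial (Fin N) ℤ :=
  ∏ p ∈ Finset.univ.filter (fun p : Fin N × Fin N => p.1 < p.2), (X p.1 - X p.2)

/-- The value `χ_λ(σ)` of the irreducible character of the symmetric group `S_n`
labelled by the partition `λ ⊢ n`, on a permutation whose cycle type is `ct`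
(cycles of length `≥ 2`; missing entries are fixed points).  This is the Frobenius
character formula: `χ_λ(σ)` is the coefficient of `x^(λ_j + n - 1 - j)` in
`∏_{i<j}(xᵢ-xⱼ) · ∏_c p_c`, the product running over the full cycle type of `σ`. -/
noncomputable def chiCT {n : ℕ} (lam : n.Partition) (ct : Multiset ℕ) : ℤ :=
  MvPolynomial.coeff
    (Finsupp.equivFunOnFinite.symm fun j : Fin n => part lam j + (n - 1 - (j : ℕ)))
    (vander n * (ct.map (pSum n)).prod * (pSum n 1) ^ (n - ct.sum))

/-- The irreducible character of `S_n` labelled by the partition `λ ⊢ n`. -/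
noncomputable def chi {n : ℕ} (lam : n.Partition) (σ : Equiv.Perm (Fin n)) : ℤ :=
  chiCT lam σ.cycleType

/-- The multi-Kronecker coefficient
`g_{μ₁,…,μ_k} = (1/n!) ∑_{σ ∈ S_n} χ_{μ₁}(σ) ⋯ χ_{μ_k}(σ)`. -/
noncomputable def kronList {n : ℕ} (L : List n.Partition) : ℚ :=
  (n.factorial : ℚ)⁻¹ *
    ∑ σ : Equiv.Perm (Fin n), (L.map fun μ => (chi μ σ : ℚ)).prod

/-- The Kronecker coefficient `g_{μνλ} = (1/n!) ∑_{σ ∈ S_n} χ_μ(σ) χ_ν(σ) χ_λ(σ)`. -/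
noncomputable def kron3 {n : ℕ} (μ ν lam : n.Partition) : ℚ := kronList [μ, ν, lam]

/-- The Littlewood–Richardson coefficient `c^λ_{μν} = ⟨s_λ, s_μ s_ν⟩` for `μ ⊢ a`,
`ν ⊢ b`, `λ ⊢ a + b`, expressed via Frobenius reciprocity as the inner product
`⟨Res^{S_{a+b}}_{S_a × S_b} χ_λ, χ_μ × χ_ν⟩`. -/
noncomputable def lr {n a b : ℕ} (lam : n.Partition) (μ : a.Partition) (ν : b.Partition) : ℚ :=
  ((a.factorial : ℚ) * (b.factorial : ℚ))⁻¹ *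
    ∑ σ : Equiv.Perm (Fin a), ∑ τ : Equiv.Perm (Fin b),
      (chi μ σ : ℚ) * (chi ν τ : ℚ) * (chiCT lam (σ.cycleType + τ.cycleType) : ℚ)

/-- The hook partition `μ(r) = (n-r, 1^r)` of `n`. -/
def hook (n r : ℕ) (h : r < n) : n.Partition where
  parts := (n - r) ::ₘ Multiset.replicate r 1
  parts_pos := by
    intro i hi
    rcases Multiset.mem_cons.mp hi with h1 | h1
    · omega
    · rw [Multiset.eq_of_mem_replicate h1]; norm_num
  parts_sum := by
    rw [Multiset.sum_cons, Multiset.sum_replicate, smul_eq_mul]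
    omega

/-- The one-column partition `(1^n)` of `n`. -/
def onesPart (n : ℕ) : n.Partition where
  parts := Multiset.replicate n 1
  parts_pos := by
    intro i hi
    rw [Multiset.eq_of_mem_replicate hi]; norm_num
  parts_sum := by simp

/-- The number of (removable) corners of a partition: the number of distinct part sizes. -/
def corners {n : ℕ} (μ : n.Partition) : ℕ := μ.parts.toFinset.card

/-- `|ν ∩ λ| = ∑ᵢ min(νᵢ, λᵢ)`, the number of boxes in the intersection of the
Young diagrams of `ν` and `λ`. -/
def interSize {n : ℕ} (ν lam : n.Partition) : ℕ :=
  ∑ j ∈ Finset.range n, min (part ν j) (part lam j)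

/-- The number of (positive) parts of the intersection `ν ∩ λ`. -/
def interLen {n : ℕ} (ν lam : n.Partition) : ℕ := min (numRows ν) (numRows lam)

/-- The smallest part `(ν∩λ)_{ℓ(ν∩λ)}` of the intersection partition `ν ∩ λ`. -/
def interMinPart {n : ℕ} (ν lam : n.Partition) : ℕ :=
  min (part ν (interLen ν lam - 1)) (part lam (interLen ν lam - 1))

/-- The smallest part `ρ_{ℓ(ρ)}` of a partition `ρ`. -/
def minPart {n : ℕ} (ρ : n.Partition) : ℕ := part ρ (numRows ρ - 1)

/-- `z_λ = ∏ᵢ i^{mᵢ} mᵢ!`, where `mᵢ` is the number of parts of `λ` equal to `i`: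
the order of the centralizer in `S_n` of a permutation of cycle type `λ`. -/
def zpart {n : ℕ} (lam : n.Partition) : ℕ :=
  ∏ i ∈ Finset.range (n + 1), i ^ (lam.parts.count i) * (lam.parts.count i).factorial

/-!
Write `m₁` for the number of unit parts of `λ ⊢ n` and `s = n - m₁`. Then
`z_λ = m₁! · ∏_{i ≥ 2} i^{mᵢ} mᵢ!`, where `∏ i^{mᵢ} ≤ 2^s` and `∏ mᵢ! ≤ (∑ mᵢ)! ≤ ⌊s/2⌋!`;
dropping the unit parts maps the `λ` with a given `s` injectively to partitions of `s`,
of which there are at most `2^s`. With `k = ⌈s/2⌉`,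
`(n - s)! ⌊s/2⌋! ≤ (n - k)! ≤ n! (2/n)^k ≤ n! (2/n)^{s/2}`, so
`∑_λ z_λ ≤ n! ∑_s (4 √(2/n))^s ≤ n! / (1 - 4 √(2/n))`, while `z_{(1^n)} = n!` alone gives
the lower bound `n!`.
-/

open Finset

@[to_additive]
theorem prod_range_succ_eq_mul_mul_prod_Icc {M : Type*} [CommMonoid M] (f : ℕ → M) {n : ℕ}
    (hn : 1 ≤ n) : ∏ i ∈ range (n + 1), f i = f 0 * f 1 * ∏ i ∈ Icc 2 n, f i := by
  have hsplit : range (n + 1) = insert 0 (insert 1 (Icc 2 n)) := by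
    ext i
    simp only [mem_range, mem_insert, mem_Icc]
    omega
  rw [hsplit, prod_insert (by simp), prod_insert (by simp), mul_assoc]

theorem card_partition_le_two_pow (s : ℕ) : Fintype.card s.Partition ≤ 2 ^ s :=
  calc Fintype.card s.Partition ≤ Fintype.card (Composition s) :=
        Fintype.card_le_of_surjective _ Nat.Partition.ofComposition_surj
    _ = 2 ^ (s - 1) := composition_card s
    _ ≤ 2 ^ s := Nat.pow_le_pow_right two_pos (Nat.sub_le s 1)

theorem prod_Icc_two_pow_mul_factorial_le (m : ℕ → ℕ) {n s : ℕ}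
    (hs : ∑ i ∈ Icc 2 n, i * m i = s) :
    ∏ i ∈ Icc 2 n, i ^ m i * (m i).factorial ≤ 2 ^ s * (s / 2).factorial := by
  have hpow : ∏ i ∈ Icc 2 n, i ^ m i ≤ 2 ^ s :=
    calc ∏ i ∈ Icc 2 n, i ^ m i ≤ ∏ i ∈ Icc 2 n, 2 ^ (i * m i) :=
          prod_le_prod' fun i _ => by
            rw [pow_mul]; exact Nat.pow_le_pow_left Nat.lt_two_pow_self.le _
      _ = 2 ^ s := by rw [prod_pow_eq_pow_sum, hs]
  have hcard : 2 * ∑ i ∈ Icc 2 n, m i ≤ s := by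
    rw [← hs, mul_sum]
    exact sum_le_sum fun i hi => Nat.mul_le_mul_right (m i) (mem_Icc.1 hi).1
  have hfact : ∏ i ∈ Icc 2 n, (m i).factorial ≤ (s / 2).factorial :=
    (Nat.le_of_dvd (Nat.factorial_pos _) (Nat.prod_factorial_dvd_factorial_sum _ _)).trans
      (Nat.factorial_le (by omega))
  rw [prod_mul_distrib]
  exact Nat.mul_le_mul hpow hfact

section Partition

variable {n : ℕ} (lam : n.Partition)

theorem sum_range_mul_count_parts : ∑ i ∈ range (n + 1), i * lam.parts.count i = n := by
  have hsub : lam.parts.toFinset ⊆ range (n + 1) := fun p hp =>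
    mem_range.2 (Nat.lt_succ_of_le (Nat.Partition.le_of_mem_parts (Multiset.mem_toFinset.1 hp)))
  rw [← sum_subset hsub fun i _ hi => by simp [Multiset.count_eq_zero.2 (by simpa using hi)]]
  simpa [mul_comm, lam.parts_sum] using (Finset.sum_multiset_count lam.parts).symm

theorem sum_Icc_mul_count_parts_add_count_one (hn : 1 ≤ n) :
    ∑ i ∈ Icc 2 n, i * lam.parts.count i + lam.parts.count 1 = n := by
  have h := sum_range_mul_count_parts lam
  rw [sum_range_succ_eq_add_add_sum_Icc _ hn] at h
  omega

theorem zpart_eq_factorial_count_one_mul (hn : 1 ≤ n) :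
    zpart lam = (lam.parts.count 1).factorial *
      ∏ i ∈ Icc 2 n, i ^ lam.parts.count i * (lam.parts.count i).factorial := by
  have hzero : lam.parts.count 0 = 0 :=
    Multiset.count_eq_zero.2 fun h => (lam.parts_pos h).false
  rw [zpart, prod_range_succ_eq_mul_mul_prod_Icc _ hn, hzero]
  simp

theorem zpart_le (hn : 1 ≤ n) :
    zpart lam ≤ (lam.parts.count 1).factorial * 2 ^ (n - lam.parts.count 1) *
      ((n - lam.parts.count 1) / 2).factorial := by
  have hsum := sum_Icc_mul_count_parts_add_count_one lam hn
  rw [zpart_eq_factorial_count_one_mul lam hn, mul_assoc]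
  exact Nat.mul_le_mul_left _ (prod_Icc_two_pow_mul_factorial_le _ (by omega))

theorem count_one_add_sum_filter_ne_one :
    lam.parts.count 1 + (lam.parts.filter (· ≠ 1)).sum = n := by
  have h := congrArg Multiset.sum (Multiset.filter_add_not (· = 1) lam.parts)
  rwa [Multiset.sum_add, Multiset.filter_eq', Multiset.sum_replicate, smul_eq_mul, mul_one,
    lam.parts_sum] at h

theorem card_filter_sub_count_one_eq_le (s : ℕ) :
    #{lam : n.Partition | n - lam.parts.count 1 = s} ≤ 2 ^ s := by
  refine le_trans ?_ (card_partition_le_two_pow s)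
  rw [← card_univ, ← card_image_of_injective univ fun _ _ => Nat.Partition.ext]
  refine card_le_card_of_injOn (fun lam => lam.parts.filter (· ≠ 1)) ?_ ?_
  · intro lam hlam
    have hs : n - lam.parts.count 1 = s := (mem_filter.1 (mem_coe.1 hlam)).2
    have hsum := count_one_add_sum_filter_ne_one lam
    exact mem_image.2 ⟨⟨_, fun h => lam.parts_pos (Multiset.mem_of_mem_filter h), by omega⟩,
      mem_univ _, rfl⟩
  · intro lam hlam mu hmu hfilter
    have hs_lam := (mem_filter.1 (mem_coe.1 hlam)).2
    have hs_mu := (mem_filter.1 (mem_coe.1 hmu)).2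
    have hsum_lam := count_one_add_sum_filter_ne_one lam
    have hsum_mu := count_one_add_sum_filter_ne_one mu
    have hone : lam.parts.count 1 = mu.parts.count 1 := by omega
    apply Nat.Partition.ext
    rw [← Multiset.filter_add_not (· = 1) lam.parts, ← Multiset.filter_add_not (· = 1) mu.parts,
      Multiset.filter_eq', Multiset.filter_eq', hone]
    exact congrArg _ hfilter

theorem sum_zpart_le (hn : 1 ≤ n) :
    ∑ lam : n.Partition, zpart lam ≤
      ∑ s ∈ range (n + 1), 4 ^ s * (n - s).factorial * (s / 2).factorial := by
  rw [← sum_fiberwise_of_maps_to (g := fun lam : n.Partition => n - lam.parts.count 1)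
    fun lam _ => mem_range.2 (Nat.lt_succ_of_le (Nat.sub_le _ _))]
  refine sum_le_sum fun s _ => ?_
  have hbound : ∀ lam ∈ ({lam : n.Partition | n - lam.parts.count 1 = s} : Finset _),
      zpart lam ≤ (n - s).factorial * 2 ^ s * (s / 2).factorial := by
    intro lam hlam
    have hs : n - lam.parts.count 1 = s := (mem_filter.1 hlam).2
    have hone : lam.parts.count 1 = n - s := by
      have hsum := count_one_add_sum_filter_ne_one lam
      omega
    have hz := zpart_le lam hn
    rwa [hs, hone] at hz
  calc _ ≤ #{lam : n.Partition | n - lam.parts.count 1 = s} *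
          ((n - s).factorial * 2 ^ s * (s / 2).factorial) := sum_le_card_nsmul _ _ _ hbound
    _ ≤ 2 ^ s * ((n - s).factorial * 2 ^ s * (s / 2).factorial) :=
        Nat.mul_le_mul_right _ (card_filter_sub_count_one_eq_le s)
    _ = 4 ^ s * (n - s).factorial * (s / 2).factorial := by
        rw [show 4 = 2 * 2 from rfl, mul_pow]
        ring

end Partition

theorem factorial_sub_mul_factorial_div_two_mul_pow_le {n s : ℕ} (hs : s ≤ n) :
    (n - s).factorial * (s / 2).factorial * n ^ (s - s / 2) ≤
      2 ^ (s - s / 2) * n.factorial := by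
  set k := s - s / 2
  have hmerge : (n - s).factorial * (s / 2).factorial ≤ (n - k).factorial := by
    have := Nat.factorial_mul_factorial_dvd_factorial_add (n - s) (s / 2)
    rw [show n - s + s / 2 = n - k by omega] at this
    exact Nat.le_of_dvd (Nat.factorial_pos _) this
  have hpeel : (n - k).factorial * (n - k + 1) ^ k ≤ n.factorial := by
    simpa [show n - k + k = n by omega] using
      Nat.factorial_mul_pow_le_factorial (m := n - k) (n := k)
  calc (n - s).factorial * (s / 2).factorial * n ^ k
      ≤ (n - k).factorial * (2 * (n - k + 1)) ^ k :=
        Nat.mul_le_mul hmerge (Nat.pow_le_pow_left (by omega) k)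
    _ = 2 ^ k * ((n - k).factorial * (n - k + 1) ^ k) := by rw [mul_pow]; ring
    _ ≤ 2 ^ k * n.factorial := Nat.mul_le_mul_left _ hpeel

theorem four_pow_mul_factorial_sub_mul_factorial_div_two_le {n s : ℕ} (hn : 2 ≤ n)
    (hs : s ≤ n) :
    ((4 ^ s * (n - s).factorial * (s / 2).factorial : ℕ) : ℝ) ≤
      n.factorial * (4 * √(2 / n)) ^ s := by
  set k := s - s / 2
  set x := √(2 / n)
  have hn0 : (0 : ℝ) < n := by positivity
  have hx0 : 0 ≤ x := Real.sqrt_nonneg _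
  have hx1 : x ≤ 1 := Real.sqrt_le_one.2 ((div_le_one hn0).2 (by exact_mod_cast hn))
  have hfact : ((n - s).factorial * (s / 2).factorial : ℝ) ≤ n.factorial * x ^ s := by
    have hcast : ((n - s).factorial * (s / 2).factorial : ℝ) * n ^ k ≤ 2 ^ k * n.factorial := by
      exact_mod_cast factorial_sub_mul_factorial_div_two_mul_pow_le hs
    calc ((n - s).factorial * (s / 2).factorial : ℝ)
        ≤ n.factorial * (2 / n) ^ k := by
          rw [div_pow, mul_div_assoc', le_div_iff₀ (by positivity)]
          linarith
      _ = n.factorial * x ^ (2 * k) := by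
          rw [pow_mul, Real.sq_sqrt (by positivity)]
      _ ≤ n.factorial * x ^ s :=
          mul_le_mul_of_nonneg_left (pow_le_pow_of_le_one hx0 hx1 (by omega)) (by positivity)
  push_cast
  calc (4 : ℝ) ^ s * (n - s).factorial * (s / 2).factorial
      = 4 ^ s * ((n - s).factorial * (s / 2).factorial) := by ring
    _ ≤ 4 ^ s * (n.factorial * x ^ s) := mul_le_mul_of_nonneg_left hfact (by positivity)
    _ = n.factorial * (4 * x) ^ s := by ring

theorem zpart_onesPart (n : ℕ) : zpart (onesPart n) = n.factorial := by
  rcases Nat.eq_zero_or_pos n with rfl | hn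
  · rfl
  · rw [zpart, prod_eq_single 1]
    · simp [onesPart]
    · intro i _ hi
      simp [onesPart, Multiset.count_replicate, Ne.symm hi]
    · simp [hn]

theorem one_le_sum_zpart_div_factorial (n : ℕ) :
    1 ≤ (∑ lam : n.Partition, (zpart lam : ℝ)) / n.factorial := by
  rw [le_div_iff₀ (by positivity), one_mul, ← zpart_onesPart n]
  exact single_le_sum (f := fun lam : n.Partition => (zpart lam : ℝ))
    (fun _ _ => by positivity) (mem_univ _)

theorem sum_zpart_div_factorial_le {n : ℕ} (hn : 2 ≤ n) :
    (∑ lam : n.Partition, (zpart lam : ℝ)) / n.factorial ≤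
      ∑ s ∈ range (n + 1), (4 * √(2 / n)) ^ s := by
  rw [div_le_iff₀ (by positivity), sum_mul]
  calc ∑ lam : n.Partition, (zpart lam : ℝ)
      ≤ ∑ s ∈ range (n + 1), ((4 ^ s * (n - s).factorial * (s / 2).factorial : ℕ) : ℝ) := by
        exact_mod_cast sum_zpart_le (by omega)
    _ ≤ ∑ s ∈ range (n + 1), (4 * √(2 / n)) ^ s * n.factorial :=
        sum_le_sum fun s hs =>
          (four_pow_mul_factorial_sub_mul_factorial_div_two_le hn
            (Nat.lt_succ_iff.1 (mem_range.1 hs))).trans_eq (mul_comm _ _)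

/-- `(∑_{λ ⊢ n} z_λ)/n! → 1` as `n → ∞`; in particular the sum
`∑_{λ ⊢ n} z_λ` is asymptotic to `n!`, dominated by the single term
`z_{(1^n)} = n!`. -/
theorem sum_z_asymptotic_factorial :
    Filter.Tendsto
      (fun n : ℕ => (∑ lam : n.Partition, (zpart lam : ℝ)) / (n.factorial : ℝ))
      Filter.atTop (nhds 1)
    ∧ ∀ n : ℕ, zpart (onesPart n) = n.factorial := by
  refine ⟨?_, zpart_onesPart⟩
  have hratio : Filter.Tendsto (fun n : ℕ => 4 * √(2 / n)) Filter.atTop (nhds 0) := by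
    simpa using ((tendsto_const_div_atTop_nhds_zero_nat 2).sqrt).const_mul 4
  have hupper : Filter.Tendsto (fun n : ℕ => (1 - 4 * √(2 / n))⁻¹) Filter.atTop (nhds 1) := by
    simpa using (tendsto_const_nhds (x := (1 : ℝ)) |>.sub hratio).inv₀ (by norm_num)
  refine tendsto_of_tendsto_of_tendsto_of_le_of_le' tendsto_const_nhds hupper
    (Filter.Eventually.of_forall one_le_sum_zpart_div_factorial) ?_
  filter_upwards [hratio.eventually (gt_mem_nhds one_pos), Filter.eventually_ge_atTop 2]
    with n hlt hn
  calc _ ≤ ∑ s ∈ range (n + 1), (4 * √(2 / n)) ^ s := sum_zpart_div_factorial_le hn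
    _ ≤ (1 - 4 * √(2 / n))⁻¹ := by
        rw [range_eq_Ico]
        simpa using geom_sum_Ico_le_of_lt_one (m := 0) (n := n + 1) (by positivity) hlt

end TensorMatrix
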